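/- Let K = (k_0, …, k_N) be a switching policy, let J ∈ {0, …, N−1} be an index such that k_J − k_{J−1} ≥ 2 if J ≥ 1 (and k_0 ≥ 1 if J = 0), and let K' = (k'_0, …, k'_N) be the policy with k'_J = k_J − 1 and k'_i = k_i for all i ≠ J. Then B(K) ≥ B(K'), i.e., decreasing a single switching point by one can only decrease the expected number of workers in the back room. -/

import Mathlib

open Finset

/-- A switching policy: `k 0 ≥ 0`, `k i - k (i-1) ≥ 1` for `1 ≤ i ≤ N`, and `k N = S`. -/
def IsPolicy (N : ℕ) (S : ℤ) (k : ℕ → ℤ) : Prop :=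
  0 ≤ k 0 ∧ (∀ i : ℕ, 1 ≤ i → i ≤ N → 1 ≤ k i - k (i - 1)) ∧ k N = S

/-- `X_i = ∏_{g=1}^{i-1} (1/g)^(k_g - k_{g-1})`. -/
noncomputable def Xcoef (k : ℕ → ℤ) (i : ℕ) : ℝ :=
  ∏ g ∈ Finset.Icc 1 (i - 1), ((1 : ℝ) / (g : ℝ)) ^ (k g - k (g - 1))

/-- `β (k 0) = 1` and, for `1 ≤ i ≤ N` and `k (i-1) + 1 ≤ j ≤ k i`,
`β j = (λ/μ)^(j - k 0) * (1/i)^(j - k (i-1)) * X_i`. -/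
def IsBeta (lam mu : ℝ) (N : ℕ) (k : ℕ → ℤ) (β : ℤ → ℝ) : Prop :=
  β (k 0) = 1 ∧
  ∀ i : ℕ, 1 ≤ i → i ≤ N → ∀ j : ℤ, k (i - 1) + 1 ≤ j → j ≤ k i →
    β j = (lam / mu) ^ (j - k 0) * ((1 : ℝ) / (i : ℝ)) ^ (j - k (i - 1)) * Xcoef k i

/-- Steady-state probabilities `P j = β j / Σ_{m=k 0}^{S} β m`. -/
noncomputable def Pfun (S : ℤ) (k : ℕ → ℤ) (β : ℤ → ℝ) (j : ℤ) : ℝ :=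
  β j / ∑ m ∈ Finset.Icc (k 0) S, β m

/-- Expected number of front-room workers. -/
noncomputable def Fval (N : ℕ) (S : ℤ) (k : ℕ → ℤ) (β : ℤ → ℝ) : ℝ :=
  ∑ i ∈ Finset.Icc 1 N, ∑ j ∈ Finset.Icc (k (i - 1) + 1) (k i), (i : ℝ) * Pfun S k β j

/-- Expected number of back-room workers. -/
noncomputable def Bval (N : ℕ) (S : ℤ) (k : ℕ → ℤ) (β : ℤ → ℝ) : ℝ :=
  (N : ℝ) - Fval N S k β

/-- Expected number of customers in the front room. -/
noncomputable def Lval (S : ℤ) (k : ℕ → ℤ) (β : ℤ → ℝ) : ℝ :=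
  ∑ j ∈ Finset.Icc (k 0) S, (j : ℝ) * Pfun S k β j

/-- Expected waiting time `W_q = L / (λ (1 - P S)) - 1/μ`. -/
noncomputable def Wq (lam mu : ℝ) (S : ℤ) (k : ℕ → ℤ) (β : ℤ → ℝ) : ℝ :=
  Lval S k β / (lam * (1 - Pfun S k β S)) - 1 / mu


/-!
The weights satisfy the balance equations `i β_j = (λ/μ) β_{j-1}` whenever `j` lies in the
`i`-th switching interval `(k_{i-1}, k_i]`. Summing them gives `F = (λ/μ) (1 - P(S))`, so the
claim is `P'(S) ≤ P(S)`. Lowering switching points can only raise the index `i` of the interval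
containing a given state, so `β'_j / β_j` is antitone on `[k_0, S]`; hence
`β'_S β_j ≤ β_S β'_j`, and summing over `j` gives `P'(S) ≤ P(S)`.
-/

variable {lam mu : ℝ} {N : ℕ} {S : ℤ} {k k' : ℕ → ℤ} {β β' : ℤ → ℝ}

lemma exists_mem_Ioc_of_lt_of_le {n : ℕ} {j : ℤ} (h0 : k 0 < j) (hn : j ≤ k n) :
    ∃ i, 1 ≤ i ∧ i ≤ n ∧ k (i - 1) < j ∧ j ≤ k i := by
  classical
  have hex : ∃ i, j ≤ k i := ⟨n, hn⟩
  have hpos : Nat.find hex ≠ 0 := fun h => by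
    have := Nat.find_spec hex
    rw [h] at this
    omega
  exact ⟨Nat.find hex, by omega, Nat.find_min' hex hn,
    not_le.1 (Nat.find_min hex (by omega)), Nat.find_spec hex⟩

lemma sum_sum_Ioc_eq_sum_Ioc {M : Type*} [AddCommMonoid M] {n : ℕ}
    (hk : MonotoneOn k (Set.Iic n)) (f : ℤ → M) :
    ∑ i ∈ Icc 1 n, ∑ j ∈ Ioc (k (i - 1)) (k i), f j = ∑ j ∈ Ioc (k 0) (k n), f j := by
  induction n with
  | zero => simp
  | succ n ih =>
    have hk' : MonotoneOn k (Set.Iic n) := hk.mono (Set.Iic_subset_Iic.2 n.le_succ)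
    rw [sum_Icc_succ_top (by omega), ih hk', Nat.add_sub_cancel, ← sum_union
      (Ioc_disjoint_Ioc_of_le le_rfl), Ioc_union_Ioc_eq_Ioc
      (hk' (Set.mem_Iic.2 n.zero_le) Set.self_mem_Iic n.zero_le)
      (hk (Set.mem_Iic.2 n.le_succ) Set.self_mem_Iic n.le_succ)]

namespace IsPolicy

lemma monotoneOn (hk : IsPolicy N S k) : MonotoneOn k (Set.Iic N) :=
  monotoneOn_of_le_add_one Set.ordConnected_Iic fun i _ _ hi => by
    have := hk.2.1 (i + 1) (by omega) hi
    rw [Nat.add_sub_cancel] at this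
    omega

lemma start_le (hk : IsPolicy N S k) : k 0 ≤ S :=
  hk.2.2 ▸ hk.monotoneOn (Set.mem_Iic.2 N.zero_le) Set.self_mem_Iic N.zero_le

lemma exists_mem_Ioc (hk : IsPolicy N S k) {j : ℤ} (h0 : k 0 < j) (hS : j ≤ S) :
    ∃ i, 1 ≤ i ∧ i ≤ N ∧ k (i - 1) < j ∧ j ≤ k i :=
  exists_mem_Ioc_of_lt_of_le h0 (hk.2.2 ▸ hS)

lemma of_decrease (hk : IsPolicy N S k) {J : ℕ} (hJ : J < N)
    (hgap1 : 1 ≤ J → 2 ≤ k J - k (J - 1)) (hgap0 : J = 0 → 1 ≤ k 0)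
    (hk'J : k' J = k J - 1) (hk'ne : ∀ i : ℕ, i ≠ J → k' i = k i) : IsPolicy N S k' := by
  refine ⟨?_, fun i hi hiN => ?_, (hk'ne N hJ.ne').trans hk.2.2⟩
  · rcases Nat.eq_zero_or_pos J with rfl | hJ0
    · have := hgap0 rfl
      omega
    · exact (hk'ne 0 hJ0.ne).symm ▸ hk.1
  · have hgap := hk.2.1 i hi hiN
    by_cases hiJ : i = J
    · subst hiJ
      have := hgap1 hi
      rw [hk'J, hk'ne (i - 1) (by omega)]
      omega
    · rw [hk'ne i hiJ]
      by_cases hiJ1 : i - 1 = J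
      · rw [hiJ1] at hgap ⊢
        omega
      · rwa [hk'ne _ hiJ1]

end IsPolicy

lemma Xcoef_succ (k : ℕ → ℤ) {i : ℕ} (hi : 1 ≤ i) :
    Xcoef k (i + 1) = Xcoef k i * ((1 : ℝ) / i) ^ (k i - k (i - 1)) := by
  obtain ⟨n, rfl⟩ := Nat.exists_eq_add_of_le' hi
  rw [Xcoef, Xcoef, Nat.add_sub_cancel, prod_Icc_succ_top (by omega), Nat.add_sub_cancel]

namespace IsBeta

lemma apply_k_sub_one (hk : IsPolicy N S k) (hβ : IsBeta lam mu N k β) {i : ℕ}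
    (hi : 1 ≤ i) (hiN : i ≤ N) :
    β (k (i - 1)) = (lam / mu) ^ (k (i - 1) - k 0) * Xcoef k i := by
  obtain rfl | ⟨n, rfl⟩ : i = 1 ∨ ∃ n, i = n + 2 := by
    rcases i with _ | _ | n <;> simp_all
  · simp [hβ.1, Xcoef]
  · have hgap := hk.2.1 (n + 1) (by omega) (by omega)
    rw [show n + 2 - 1 = n + 1 by omega, hβ.2 (n + 1) (by omega) (by omega) _ (by omega) le_rfl,
      Xcoef_succ k (by omega : 1 ≤ n + 1)]
    push_cast
    ring

lemma balance (hlam : 0 < lam) (hmu : 0 < mu) (hk : IsPolicy N S k)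
    (hβ : IsBeta lam mu N k β) {i : ℕ} (hi : 1 ≤ i) (hiN : i ≤ N) {j : ℤ}
    (hj : k (i - 1) < j) (hj' : j ≤ k i) :
    (i : ℝ) * β j = lam / mu * β (j - 1) := by
  have hr : lam / mu ≠ 0 := (div_pos hlam hmu).ne'
  have hi' : (i : ℝ) ≠ 0 := by positivity
  rw [hβ.2 i hi hiN j hj hj', show j - k 0 = j - 1 - k 0 + 1 by ring, zpow_add_one₀ hr]
  rcases (Int.le_sub_one_of_lt hj).eq_or_lt with hj1 | hj1
  · rw [← hj1, apply_k_sub_one hk hβ hi hiN, hj1, sub_sub_cancel, zpow_one]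
    field_simp
  · rw [hβ.2 i hi hiN (j - 1) (by omega) (by omega),
      show j - k (i - 1) = j - 1 - k (i - 1) + 1 by ring,
      zpow_add_one₀ (by positivity : (1 : ℝ) / i ≠ 0)]
    field_simp

lemma pos (hlam : 0 < lam) (hmu : 0 < mu) (hk : IsPolicy N S k) (hβ : IsBeta lam mu N k β)
    {j : ℤ} (h0 : k 0 ≤ j) (hS : j ≤ S) : 0 < β j := by
  induction j, h0 using Int.leInduction with
  | base => simp [hβ.1]
  | succ j hj ih =>
    obtain ⟨i, hi, hiN, hij, hji⟩ := hk.exists_mem_Ioc (by omega) hS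
    have hb := hβ.balance hlam hmu hk hi hiN hij hji
    rw [add_sub_cancel_right] at hb
    have : 0 < (i : ℝ) * β (j + 1) := hb ▸ mul_pos (div_pos hlam hmu) (ih (by omega))
    exact pos_of_mul_pos_right this (by positivity)

lemma sum_pos (hlam : 0 < lam) (hmu : 0 < mu) (hk : IsPolicy N S k)
    (hβ : IsBeta lam mu N k β) : 0 < ∑ m ∈ Icc (k 0) S, β m :=
  Finset.sum_pos (fun _ hm => hβ.pos hlam hmu hk (mem_Icc.1 hm).1 (mem_Icc.1 hm).2)
    ⟨k 0, mem_Icc.2 ⟨le_rfl, hk.start_le⟩⟩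

end IsBeta

lemma Fval_eq (hlam : 0 < lam) (hmu : 0 < mu) (hk : IsPolicy N S k)
    (hβ : IsBeta lam mu N k β) : Fval N S k β = lam / mu * (1 - Pfun S k β S) := by
  have hG := hβ.sum_pos hlam hmu hk
  have hbalance : ∑ i ∈ Icc 1 N, ∑ j ∈ Ioc (k (i - 1)) (k i), (i : ℝ) * β j
      = lam / mu * ∑ i ∈ Icc 1 N, ∑ j ∈ Ioc (k (i - 1)) (k i), β (j - 1) := by
    simp_rw [mul_sum]
    refine sum_congr rfl fun i hi => sum_congr rfl fun j hj => ?_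
    exact hβ.balance hlam hmu hk (mem_Icc.1 hi).1 (mem_Icc.1 hi).2 (mem_Ioc.1 hj).1
      (mem_Ioc.1 hj).2
  have hshift : ∑ j ∈ Ioc (k 0) S, β (j - 1) = ∑ m ∈ Icc (k 0) S, β m - β S := by
    rw [← Icc_add_one_left_eq_Ioc, ← Ico_add_one_right_eq_Icc, ← sum_Ico_add',
      Icc_eq_cons_Ico hk.start_le, sum_cons]
    simp
  simp only [Fval, Pfun, Icc_add_one_left_eq_Ioc, mul_div_assoc', ← sum_div]
  rw [hbalance, sum_sum_Ioc_eq_sum_Ioc hk.monotoneOn, hk.2.2, hshift]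
  field_simp

lemma IsBeta.mul_le_mul_sub_one (hlam : 0 < lam) (hmu : 0 < mu) (hk : IsPolicy N S k)
    (hk' : IsPolicy N S k') (hle : ∀ i ≤ N, k' i ≤ k i) (hβ : IsBeta lam mu N k β)
    (hβ' : IsBeta lam mu N k' β') {j : ℤ} (h0 : k 0 < j) (hS : j ≤ S) :
    β' j * β (j - 1) ≤ β' (j - 1) * β j := by
  have hk0 := hle 0 N.zero_le
  obtain ⟨i, hi, hiN, hij, hji⟩ := hk.exists_mem_Ioc h0 hS
  obtain ⟨i', hi', hi'N, hi'j, hji'⟩ := hk'.exists_mem_Ioc (by omega) hS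
  have hii' : i ≤ i' := by
    by_contra! h
    have := hk.monotoneOn (a := i') (b := i - 1) (Set.mem_Iic.2 hi'N) (Set.mem_Iic.2 (by omega))
      (by omega)
    linarith [hle i' hi'N]
  have hb := hβ.balance hlam hmu hk hi hiN hij hji
  have hb' := hβ'.balance hlam hmu hk' hi' hi'N hi'j hji'
  have hββ' : 0 ≤ β j * β' j :=
    (mul_pos (hβ.pos hlam hmu hk h0.le hS) (hβ'.pos hlam hmu hk' (by omega) hS)).le
  refine le_of_mul_le_mul_left ?_ (div_pos hlam hmu)
  calc lam / mu * (β' j * β (j - 1)) = i * (β j * β' j) := by linear_combination (-β' j) * hb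
    _ ≤ i' * (β j * β' j) := by gcongr
    _ = lam / mu * (β' (j - 1) * β j) := by linear_combination β j * hb'

lemma IsBeta.antitoneOn_div (hlam : 0 < lam) (hmu : 0 < mu) (hk : IsPolicy N S k)
    (hk' : IsPolicy N S k') (hle : ∀ i ≤ N, k' i ≤ k i) (hβ : IsBeta lam mu N k β)
    (hβ' : IsBeta lam mu N k' β') : AntitoneOn (fun j => β' j / β j) (Set.Icc (k 0) S) :=
  antitoneOn_of_le_sub_one Set.ordConnected_Icc fun j _ hj hj1 => by
    rw [div_le_div_iff₀ (hβ.pos hlam hmu hk hj.1 hj.2) (hβ.pos hlam hmu hk hj1.1 hj1.2)]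
    exact hβ.mul_le_mul_sub_one hlam hmu hk hk' hle hβ' (by linarith [hj1.1]) hj.2

lemma Pfun_top_le_of_le (hlam : 0 < lam) (hmu : 0 < mu) (hk : IsPolicy N S k)
    (hk' : IsPolicy N S k') (hle : ∀ i ≤ N, k' i ≤ k i) (hβ : IsBeta lam mu N k β)
    (hβ' : IsBeta lam mu N k' β') : Pfun S k' β' S ≤ Pfun S k β S := by
  have hk0 := hle 0 N.zero_le
  have hpos {m} (hm : m ∈ Icc (k 0) S) := hβ.pos hlam hmu hk (mem_Icc.1 hm).1 (mem_Icc.1 hm).2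
  have hpos' {m} (hm : m ∈ Icc (k' 0) S) :=
    hβ'.pos hlam hmu hk' (mem_Icc.1 hm).1 (mem_Icc.1 hm).2
  have hS : S ∈ Icc (k 0) S := mem_Icc.2 ⟨hk.start_le, le_rfl⟩
  rw [Pfun, Pfun, div_le_div_iff₀ (hβ'.sum_pos hlam hmu hk') (hβ.sum_pos hlam hmu hk), mul_sum]
  calc ∑ m ∈ Icc (k 0) S, β' S * β m ≤ ∑ m ∈ Icc (k 0) S, β S * β' m :=
        sum_le_sum fun m hm => ((div_le_div_iff₀ (hpos hS) (hpos hm)).1 <|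
          hβ.antitoneOn_div hlam hmu hk hk' hle hβ' (Set.mem_Icc.2 (mem_Icc.1 hm))
            (Set.mem_Icc.2 (mem_Icc.1 hS)) (mem_Icc.1 hm).2).trans_eq (mul_comm _ _)
    _ = β S * ∑ m ∈ Icc (k 0) S, β' m := (mul_sum _ _ _).symm
    _ ≤ β S * ∑ m ∈ Icc (k' 0) S, β' m :=
        mul_le_mul_of_nonneg_left (sum_le_sum_of_subset_of_nonneg (Icc_subset_Icc_left hk0)
          fun m hm _ => (hpos' hm).le) (hpos hS).le

theorem Bval_le_of_le (hlam : 0 < lam) (hmu : 0 < mu) (hk : IsPolicy N S k)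
    (hk' : IsPolicy N S k') (hle : ∀ i ≤ N, k' i ≤ k i) (hβ : IsBeta lam mu N k β)
    (hβ' : IsBeta lam mu N k' β') : Bval N S k' β' ≤ Bval N S k β := by
  rw [Bval, Bval, Fval_eq hlam hmu hk' hβ', Fval_eq hlam hmu hk hβ]
  have := Pfun_top_le_of_le hlam hmu hk hk' hle hβ hβ'
  have := div_pos hlam hmu
  gcongr

theorem b_single_decrease_general
    (lam mu : ℝ) (hlam : 0 < lam) (hmu : 0 < mu)
    (N : ℕ) (S : ℤ)
    (k k' : ℕ → ℤ) (hk : IsPolicy N S k)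
    (J : ℕ) (hJ : J < N)
    (hgap1 : 1 ≤ J → 2 ≤ k J - k (J - 1))
    (hgap0 : J = 0 → 1 ≤ k 0)
    (hk'J : k' J = k J - 1)
    (hk'ne : ∀ i : ℕ, i ≠ J → k' i = k i)
    (β β' : ℤ → ℝ)
    (hβ : IsBeta lam mu N k β) (hβ' : IsBeta lam mu N k' β') :
    Bval N S k' β' ≤ Bval N S k β := by
  refine Bval_le_of_le hlam hmu hk (hk.of_decrease hJ hgap1 hgap0 hk'J hk'ne)
    (fun i _ => ?_) hβ hβ'
  by_cases hi : i = J
  · rw [hi, hk'J]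
    omega
  · rw [hk'ne i hi]

/-- Decreasing a single switching point by one can only decrease the
expected number of workers in the back room. -/
theorem b_single_decrease
    (lam mu : ℝ) (hlam : 0 < lam) (hmu : 0 < mu)
    (N : ℕ) (hN : 1 ≤ N) (S : ℤ) (hS : (N : ℤ) ≤ S)
    (k k' : ℕ → ℤ) (hk : IsPolicy N S k)
    (J : ℕ) (hJ : J < N)
    (hgap1 : 1 ≤ J → 2 ≤ k J - k (J - 1))
    (hgap0 : J = 0 → 1 ≤ k 0)
    (hk'J : k' J = k J - 1)
    (hk'ne : ∀ i : ℕ, i ≠ J → k' i = k i)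
    (β β' : ℤ → ℝ)
    (hβ : IsBeta lam mu N k β) (hβ' : IsBeta lam mu N k' β') :
    Bval N S k' β' ≤ Bval N S k β :=
  b_single_decrease_general lam mu hlam hmu N S k k' hk J hJ hgap1 hgap0 hk'J hk'ne β β' hβ hβ'
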